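/- Let n ≥ 1, let V : ℝⁿ → ℝ be smooth, let Φ be a global Hamiltonian flow for V, let t₀ > 0, (y₀,η₀), z₀, T × Y × Z and η̂ be as in the central field setting with T ⊆ (0,∞), and let λ ∈ ℝ with action S as in the action setting. Then the Lagrangian set parameterized by the phase S is contained in the forward flow relation at energy λ: {(y, −η̂(t,y,z), z, ∇_z S(t,y,z)) : (t,y,z) ∈ T × Y × Z, ∂S/∂t(t,y,z) = 0} ⊆ {(y, −η, x, ξ) : p(y,η) = λ, (x,ξ) = Φ(t,(y,η)) for some t > 0}. -/

import Mathlib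

open scoped RealInnerProductSpace
open Filter

noncomputable section

/-- Euclidean configuration space `ℝⁿ`. -/
abbrev Euc (n : ℕ) := EuclideanSpace ℝ (Fin n)

/-- The Hamiltonian `p(x, ξ) = ½‖ξ‖² + V(x)` on phase space `ℝⁿ × ℝⁿ`. -/
def Ham (n : ℕ) (V : Euc n → ℝ) (z : Euc n × Euc n) : ℝ :=
  (1 / 2) * ‖z.2‖ ^ 2 + V z.1

/-- The Hamiltonian vector field `X_p(x, ξ) = (ξ, −∇V(x))`. -/
def HamVF (n : ℕ) (V : Euc n → ℝ) (z : Euc n × Euc n) : Euc n × Euc n :=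
  (z.2, -gradient V z.1)

/-- `Φ` is a global Hamiltonian flow for the potential `V`: a smooth map
`ℝ × (ℝⁿ × ℝⁿ) → ℝⁿ × ℝⁿ` with `Φ 0 z = z`, `∂ₜΦ(t,z) = X_p(Φ(t,z))` and the
group law `Φ(s+t, z) = Φ(s, Φ(t, z))`. -/
def IsGlobalHamFlow (n : ℕ) (V : Euc n → ℝ)
    (Φ : ℝ → Euc n × Euc n → Euc n × Euc n) : Prop :=
  ContDiff ℝ (⊤ : ℕ∞) (fun q : ℝ × (Euc n × Euc n) => Φ q.1 q.2) ∧
  (∀ z, Φ 0 z = z) ∧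
  (∀ t z, HasDerivAt (fun s => Φ s z) (HamVF n V (Φ t z)) t) ∧
  (∀ s t z, Φ (s + t) z = Φ s (Φ t z))

lemma contDiff_gradient {n : ℕ} {V : Euc n → ℝ} (hV : ContDiff ℝ (⊤ : ℕ∞) V) :
    ContDiff ℝ (⊤ : ℕ∞) (gradient V) := by
  have h : gradient V = fun x => (InnerProductSpace.toDual ℝ (Euc n)).symm (fderiv ℝ V x) := rfl
  rw [h]
  exact (InnerProductSpace.toDual ℝ (Euc n)).symm.contDiff.comp (hV.fderiv_right (by simp))

lemma hasFDerivAt_V {n : ℕ} {V : Euc n → ℝ} (hV : ContDiff ℝ (⊤ : ℕ∞) V) (x : Euc n) :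
    HasFDerivAt V (innerSL ℝ (gradient V x)) x := by
  have h := (hV.differentiable (by simp) x).hasGradientAt.hasFDerivAt
  exact h

lemma energy_conserved {n : ℕ} {V : Euc n → ℝ} (hV : ContDiff ℝ (⊤ : ℕ∞) V)
    {Φ : ℝ → Euc n × Euc n → Euc n × Euc n} (hΦ : IsGlobalHamFlow n V Φ)
    (s : ℝ) (w : Euc n × Euc n) : Ham n V (Φ s w) = Ham n V w := by
  have key : ∀ u : ℝ, HasDerivAt (fun r => Ham n V (Φ r w)) 0 u := by
    intro u
    have hflow := hΦ.2.2.1 u w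
    have hx : HasDerivAt (fun r => (Φ r w).1) ((Φ u w).2) u := by
      have := (ContinuousLinearMap.fst ℝ (Euc n) (Euc n)).hasFDerivAt.comp_hasDerivAt u hflow
      simpa [HamVF, Function.comp_def] using this
    have hξ : HasDerivAt (fun r => (Φ r w).2) (-gradient V (Φ u w).1) u := by
      have := (ContinuousLinearMap.snd ℝ (Euc n) (Euc n)).hasFDerivAt.comp_hasDerivAt u hflow
      simpa [HamVF, Function.comp_def] using this
    have hnorm : HasDerivAt (fun r => ‖(Φ r w).2‖ ^ 2)
        (2 * ⟪(Φ u w).2, -gradient V (Φ u w).1⟫) u := hξ.norm_sq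
    have hVc : HasDerivAt (fun r => V (Φ r w).1)
        (⟪gradient V (Φ u w).1, (Φ u w).2⟫) u := by
      have := (hasFDerivAt_V hV (Φ u w).1).comp_hasDerivAt u hx
      simpa [Function.comp_def] using this
    have hsum := (hnorm.const_mul (1/2 : ℝ)).add hVc
    have heq : (1/2 : ℝ) * (2 * ⟪(Φ u w).2, -gradient V (Φ u w).1⟫) +
        ⟪gradient V (Φ u w).1, (Φ u w).2⟫ = 0 := by
      rw [inner_neg_right, real_inner_comm]
      ring
    rw [heq] at hsum
    exact hsum
  have hconst := is_const_of_deriv_eq_zero (fun u => (key u).differentiableAt)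
    (fun u => (key u).deriv) s 0
  simpa [hΦ.2.1 w] using hconst

/-- The flow with fixed initial position `y`, as a function of time and initial momentum. -/
def flowY (n : ℕ) (Φ : ℝ → Euc n × Euc n → Euc n × Euc n) (y : Euc n)
    (q : ℝ × Euc n) : Euc n × Euc n := Φ q.1 (y, q.2)

/-- The Lagrangian (plus `lam`) along the flow. -/
def lag (n : ℕ) (V : Euc n → ℝ) (Φ : ℝ → Euc n × Euc n → Euc n × Euc n) (y : Euc n)
    (lam : ℝ) (q : ℝ × Euc n) : ℝ :=
  (1 / 2) * ‖(flowY n Φ y q).2‖ ^ 2 - V (flowY n Φ y q).1 + lam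

/-- The `μ`-partial derivative of `lag`. -/
def lagD (n : ℕ) (V : Euc n → ℝ) (Φ : ℝ → Euc n × Euc n → Euc n × Euc n) (y : Euc n)
    (q : ℝ × Euc n) : Euc n →L[ℝ] ℝ :=
  (innerSL ℝ (flowY n Φ y q).2).comp
    ((ContinuousLinearMap.snd ℝ (Euc n) (Euc n)).comp
      ((fderiv ℝ (flowY n Φ y) q).comp (ContinuousLinearMap.inr ℝ ℝ (Euc n)))) -
  (innerSL ℝ (gradient V (flowY n Φ y q).1)).comp
    ((ContinuousLinearMap.fst ℝ (Euc n) (Euc n)).comp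
      ((fderiv ℝ (flowY n Φ y) q).comp (ContinuousLinearMap.inr ℝ ℝ (Euc n))))

variable {n : ℕ} {V : Euc n → ℝ} {Φ : ℝ → Euc n × Euc n → Euc n × Euc n} {y : Euc n}
  {lam : ℝ}

lemma contDiff_flowY (hΦ : IsGlobalHamFlow n V Φ) : ContDiff ℝ (⊤ : ℕ∞) (flowY n Φ y) :=
  hΦ.1.comp (contDiff_fst.prodMk (contDiff_const.prodMk contDiff_snd))

lemma hasFDerivAt_flowY (hΦ : IsGlobalHamFlow n V Φ) (q : ℝ × Euc n) :
    HasFDerivAt (flowY n Φ y) (fderiv ℝ (flowY n Φ y) q) q :=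
  ((contDiff_flowY hΦ).differentiable (by simp) q).hasFDerivAt

lemma flowY_t (hΦ : IsGlobalHamFlow n V Φ) (q : ℝ × Euc n) :
    HasDerivAt (fun s => flowY n Φ y (s, q.2)) (HamVF n V (flowY n Φ y q)) q.1 :=
  hΦ.2.2.1 q.1 (y, q.2)

lemma fderiv_flowY_one (hΦ : IsGlobalHamFlow n V Φ) (q : ℝ × Euc n) :
    fderiv ℝ (flowY n Φ y) q (1, 0) = HamVF n V (flowY n Φ y q) := by
  have h1 : HasDerivAt (fun s => flowY n Φ y (s, q.2))
      (fderiv ℝ (flowY n Φ y) q (1, 0)) q.1 := by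
    have hline : HasDerivAt (fun s : ℝ => (s, q.2)) ((1 : ℝ), (0 : Euc n)) q.1 :=
      (hasDerivAt_id q.1).prodMk (hasDerivAt_const q.1 q.2)
    exact (hasFDerivAt_flowY hΦ q).comp_hasDerivAt q.1 hline
  exact h1.unique (flowY_t hΦ q)

lemma hasFDerivAt_flowY_slice (hΦ : IsGlobalHamFlow n V Φ) (s : ℝ) (μ : Euc n) :
    HasFDerivAt (fun μ' => flowY n Φ y (s, μ'))
      ((fderiv ℝ (flowY n Φ y) (s, μ)).comp (ContinuousLinearMap.inr ℝ ℝ (Euc n))) μ := by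
  have hline : HasFDerivAt (fun μ' : Euc n => ((s : ℝ), μ'))
      (ContinuousLinearMap.inr ℝ ℝ (Euc n)) μ :=
    (hasFDerivAt_const s μ).prodMk (hasFDerivAt_id μ)
  exact (hasFDerivAt_flowY hΦ (s, μ)).comp μ hline

lemma fderiv_flowY_zero (hΦ : IsGlobalHamFlow n V Φ) (μ v : Euc n) :
    fderiv ℝ (flowY n Φ y) (0, μ) (0, v) = ((0 : Euc n), v) := by
  have h1 := hasFDerivAt_flowY_slice (y := y) hΦ 0 μ
  have h2 : HasFDerivAt (fun μ' : Euc n => flowY n Φ y ((0:ℝ), μ'))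
      (ContinuousLinearMap.inr ℝ (Euc n) (Euc n)) μ := by
    have heq : (fun μ' : Euc n => flowY n Φ y ((0:ℝ), μ')) = fun μ' : Euc n => (y, μ') := by
      funext μ'
      exact hΦ.2.1 (y, μ')
    rw [heq]
    exact (hasFDerivAt_const y μ).prodMk (hasFDerivAt_id μ)
  have h3 := h1.unique h2
  calc fderiv ℝ (flowY n Φ y) (0, μ) (0, v)
      = ((fderiv ℝ (flowY n Φ y) (0, μ)).comp (ContinuousLinearMap.inr ℝ ℝ (Euc n))) v := rfl
    _ = ((0 : Euc n), v) := by rw [h3]; rfl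

lemma contDiff_hamVF (hV : ContDiff ℝ (⊤ : ℕ∞) V) : ContDiff ℝ (⊤ : ℕ∞) (HamVF n V) :=
  contDiff_snd.prodMk ((contDiff_gradient hV).comp contDiff_fst).neg

lemma hasFDerivAt_hamVF (hV : ContDiff ℝ (⊤ : ℕ∞) V) (p : Euc n × Euc n) :
    HasFDerivAt (HamVF n V) (fderiv ℝ (HamVF n V) p) p :=
  ((contDiff_hamVF hV).differentiable (by simp) p).hasFDerivAt

lemma fderiv_hamVF_fst (hV : ContDiff ℝ (⊤ : ℕ∞) V) (p u : Euc n × Euc n) :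
    (fderiv ℝ (HamVF n V) p u).1 = u.2 := by
  have h1 : HasFDerivAt (fun p : Euc n × Euc n => (HamVF n V p).1)
      ((ContinuousLinearMap.fst ℝ (Euc n) (Euc n)).comp (fderiv ℝ (HamVF n V) p)) p :=
    (ContinuousLinearMap.fst ℝ (Euc n) (Euc n)).hasFDerivAt.comp p (hasFDerivAt_hamVF hV p)
  have h2 : HasFDerivAt (fun p : Euc n × Euc n => (HamVF n V p).1)
      (ContinuousLinearMap.snd ℝ (Euc n) (Euc n)) p := hasFDerivAt_snd
  have := h1.unique h2
  calc (fderiv ℝ (HamVF n V) p u).1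
      = ((ContinuousLinearMap.fst ℝ (Euc n) (Euc n)).comp (fderiv ℝ (HamVF n V) p)) u := rfl
    _ = u.2 := by rw [this]; rfl

lemma clairaut (hV : ContDiff ℝ (⊤ : ℕ∞) V) (hΦ : IsGlobalHamFlow n V Φ) (μ v : Euc n) (s : ℝ) :
    HasDerivAt (fun r => fderiv ℝ (flowY n Φ y) (r, μ) (0, v))
      (fderiv ℝ (HamVF n V) (flowY n Φ y (s, μ))
        (fderiv ℝ (flowY n Φ y) (s, μ) (0, v))) s := by
  set F := flowY n Φ y with hF
  set B := fderiv ℝ F with hBdef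
  have hB : ContDiff ℝ (⊤ : ℕ∞) B := (contDiff_flowY hΦ).fderiv_right (by simp)
  have hBq : HasFDerivAt B (fderiv ℝ B (s, μ)) (s, μ) :=
    (hB.differentiable (by simp) (s, μ)).hasFDerivAt
  have step1 : HasDerivAt (fun r => B (r, μ)) (fderiv ℝ B (s, μ) (1, 0)) s :=
    hBq.comp_hasDerivAt s ((hasDerivAt_id s).prodMk (hasDerivAt_const s μ))
  have step2 : HasDerivAt (fun r => B (r, μ) (0, v))
      ((fderiv ℝ B (s, μ) (1, 0)) (0, v)) s :=
    (ContinuousLinearMap.apply ℝ (Euc n × Euc n) ((0 : ℝ), v)).hasFDerivAt.comp_hasDerivAt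
      s step1
  have hsym : fderiv ℝ B (s, μ) (1, 0) (0, v) = fderiv ℝ B (s, μ) (0, v) (1, 0) :=
    second_derivative_symmetric (fun q => hasFDerivAt_flowY hΦ q) hBq _ _
  have step4 : fderiv ℝ B (s, μ) (0, v) (1, 0) =
      fderiv ℝ (HamVF n V) (F (s, μ)) (B (s, μ) (0, v)) := by
    have hg1 : HasFDerivAt (fun q => B q (1, 0))
        ((ContinuousLinearMap.apply ℝ (Euc n × Euc n) ((1 : ℝ), (0 : Euc n))).comp
          (fderiv ℝ B (s, μ))) (s, μ) :=
      (ContinuousLinearMap.apply ℝ (Euc n × Euc n) ((1 : ℝ), (0 : Euc n))).hasFDerivAt.comp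
        (s, μ) hBq
    have hgeq : (fun q => B q (1, 0)) = fun q => HamVF n V (F q) := by
      funext q
      exact fderiv_flowY_one hΦ q
    rw [hgeq] at hg1
    have hg2 : HasFDerivAt (fun q => HamVF n V (F q))
        ((fderiv ℝ (HamVF n V) (F (s, μ))).comp (B (s, μ))) (s, μ) :=
      (hasFDerivAt_hamVF hV (F (s, μ))).comp (s, μ) (hasFDerivAt_flowY hΦ (s, μ))
    have := hg1.unique hg2
    calc fderiv ℝ B (s, μ) (0, v) (1, 0)
        = ((ContinuousLinearMap.apply ℝ (Euc n × Euc n) ((1 : ℝ), (0 : Euc n))).comp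
            (fderiv ℝ B (s, μ))) (0, v) := rfl
      _ = ((fderiv ℝ (HamVF n V) (F (s, μ))).comp (B (s, μ))) (0, v) := by rw [this]
      _ = fderiv ℝ (HamVF n V) (F (s, μ)) (B (s, μ) (0, v)) := rfl
  rw [hsym, step4] at step2
  exact step2

lemma hasFDerivAt_lag_slice (hV : ContDiff ℝ (⊤ : ℕ∞) V) (hΦ : IsGlobalHamFlow n V Φ)
    (s : ℝ) (μ : Euc n) :
    HasFDerivAt (fun μ' => lag n V Φ y lam (s, μ')) (lagD n V Φ y (s, μ)) μ := by
  have hFs := hasFDerivAt_flowY_slice (y := y) hΦ s μ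
  have h2 := hFs.snd
  have h1 := hFs.fst
  have hnorm := h2.norm_sq
  have hhalf := hnorm.const_mul (1/2 : ℝ)
  have hVpart := (hasFDerivAt_V hV (flowY n Φ y (s, μ)).1).comp μ h1
  have total := (hhalf.sub hVpart).add_const lam
  refine total.congr_fderiv ?_
  ext w
  simp [lagD]
  try ring

lemma phi_hasDerivAt (hV : ContDiff ℝ (⊤ : ℕ∞) V) (hΦ : IsGlobalHamFlow n V Φ)
    (μ v : Euc n) (s : ℝ) :
    HasDerivAt (fun r => ⟪(flowY n Φ y (r, μ)).2,
        (fderiv ℝ (flowY n Φ y) (r, μ) (0, v)).1⟫)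
      (lagD n V Φ y (s, μ) v) s := by
  have hξ : HasDerivAt (fun r => (flowY n Φ y (r, μ)).2)
      (-gradient V (flowY n Φ y (s, μ)).1) s := by
    have := (ContinuousLinearMap.snd ℝ (Euc n) (Euc n)).hasFDerivAt.comp_hasDerivAt
      s (flowY_t (y := y) hΦ (s, μ))
    simpa [HamVF, Function.comp_def] using this
  have ha1 : HasDerivAt (fun r => (fderiv ℝ (flowY n Φ y) (r, μ) (0, v)).1)
      ((fderiv ℝ (flowY n Φ y) (s, μ) (0, v)).2) s := by
    have := (ContinuousLinearMap.fst ℝ (Euc n) (Euc n)).hasFDerivAt.comp_hasDerivAt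
      s (clairaut (y := y) hV hΦ μ v s)
    have heq := fderiv_hamVF_fst hV (flowY n Φ y (s, μ))
      (fderiv ℝ (flowY n Φ y) (s, μ) (0, v))
    simpa [heq, Function.comp_def] using this
  have := hξ.inner ℝ ha1
  refine this.congr_deriv ?_
  simp [lagD, real_inner_comm]
  ring

lemma continuous_lag (hV : ContDiff ℝ (⊤ : ℕ∞) V) (hΦ : IsGlobalHamFlow n V Φ) :
    Continuous (lag n V Φ y lam) := by
  have hFc := (contDiff_flowY (V := V) (y := y) hΦ).continuous
  exact ((continuous_const.mul ((hFc.snd.norm).pow 2)).sub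
    (hV.continuous.comp hFc.fst)).add continuous_const

lemma continuous_lagD (hV : ContDiff ℝ (⊤ : ℕ∞) V) (hΦ : IsGlobalHamFlow n V Φ) :
    Continuous (lagD n V Φ y) := by
  have hFc := (contDiff_flowY (V := V) (y := y) hΦ).continuous
  have hBc := ((contDiff_flowY (V := V) (y := y) hΦ).fderiv_right (m := (⊤ : ℕ∞)) (by simp)).continuous
  have hM : Continuous fun q : ℝ × Euc n =>
      (fderiv ℝ (flowY n Φ y) q).comp (ContinuousLinearMap.inr ℝ ℝ (Euc n)) :=
    hBc.clm_comp continuous_const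
  have h1 : Continuous fun q : ℝ × Euc n =>
      (innerSL ℝ (flowY n Φ y q).2).comp
        ((ContinuousLinearMap.snd ℝ (Euc n) (Euc n)).comp
          ((fderiv ℝ (flowY n Φ y) q).comp (ContinuousLinearMap.inr ℝ ℝ (Euc n)))) :=
    ((innerSL ℝ).continuous.comp hFc.snd).clm_comp (continuous_const.clm_comp hM)
  have h2 : Continuous fun q : ℝ × Euc n =>
      (innerSL ℝ (gradient V (flowY n Φ y q).1)).comp
        ((ContinuousLinearMap.fst ℝ (Euc n) (Euc n)).comp
          ((fderiv ℝ (flowY n Φ y) q).comp (ContinuousLinearMap.inr ℝ ℝ (Euc n)))) :=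
    ((innerSL ℝ).continuous.comp
      ((contDiff_gradient hV).continuous.comp hFc.fst)).clm_comp
      (continuous_const.clm_comp hM)
  exact h1.sub h2

lemma integral_lagD (hV : ContDiff ℝ (⊤ : ℕ∞) V) (hΦ : IsGlobalHamFlow n V Φ)
    (t : ℝ) (μ v : Euc n) :
    ∫ s in (0:ℝ)..t, lagD n V Φ y (s, μ) v =
      ⟪(flowY n Φ y (t, μ)).2, (fderiv ℝ (flowY n Φ y) (t, μ) (0, v)).1⟫ := by
  have hcont : Continuous fun s : ℝ => lagD n V Φ y (s, μ) v :=
    ((continuous_lagD hV hΦ).comp (continuous_id.prodMk continuous_const)).clm_apply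
      continuous_const
  have h := intervalIntegral.integral_eq_sub_of_hasDerivAt
    (f := fun r => ⟪(flowY n Φ y (r, μ)).2, (fderiv ℝ (flowY n Φ y) (r, μ) (0, v)).1⟫)
    (f' := fun s => lagD n V Φ y (s, μ) v)
    (fun s _ => phi_hasDerivAt hV hΦ μ v s) (hcont.intervalIntegrable 0 t)
  rw [h]
  simp [fderiv_flowY_zero (y := y) hΦ μ v]

lemma hasFDerivAt_integral_slice (hV : ContDiff ℝ (⊤ : ℕ∞) V) (hΦ : IsGlobalHamFlow n V Φ)
    (t : ℝ) (μ : Euc n) :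
    HasFDerivAt (fun μ' => ∫ s in (0:ℝ)..t, lag n V Φ y lam (s, μ'))
      (∫ s in (0:ℝ)..t, lagD n V Φ y (s, μ)) μ := by
  have hK : IsCompact ((Set.uIcc (0:ℝ) t) ×ˢ Metric.closedBall μ 1) :=
    isCompact_uIcc.prod (isCompact_closedBall μ 1)
  obtain ⟨M, hM⟩ := hK.exists_bound_of_continuousOn (continuous_lagD hV hΦ).continuousOn
  have key := intervalIntegral.hasFDerivAt_integral_of_dominated_loc_of_lip
    (F := fun μ' s => lag n V Φ y lam (s, μ')) (F' := fun s => lagD n V Φ y (s, μ))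
    (x₀ := μ) (a := 0) (b := t) (bound := fun _ => M) (μ := MeasureTheory.volume)
    (Metric.ball_mem_nhds μ one_pos)
    (Eventually.of_forall fun μ' =>
      (((continuous_lag hV hΦ).comp
        (continuous_id.prodMk continuous_const)).aestronglyMeasurable))
    (((continuous_lag hV hΦ).comp
      (continuous_id.prodMk continuous_const)).intervalIntegrable 0 t)
    (((continuous_lagD hV hΦ).comp
      (continuous_id.prodMk continuous_const)).aestronglyMeasurable)
    ?_ (intervalIntegrable_const) ?_
  · exact key.2
  · refine Eventually.of_forall fun s hs => ?_
    refine (convex_ball μ 1).lipschitzOnWith_of_nnnorm_hasFDerivWithin_le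
      (f' := fun μ' => lagD n V Φ y (s, μ'))
      (fun μ' _ => (hasFDerivAt_lag_slice hV hΦ s μ').hasFDerivWithinAt) ?_
    intro μ' hμ'
    have hmem : (s, μ') ∈ (Set.uIcc (0:ℝ) t) ×ˢ Metric.closedBall μ 1 :=
      ⟨Set.uIoc_subset_uIcc hs, Metric.ball_subset_closedBall hμ'⟩
    have := hM (s, μ') hmem
    rw [← NNReal.coe_le_coe]
    simp only [coe_nnnorm, Real.coe_nnabs]
    exact this.trans (le_abs_self M)
  · exact Eventually.of_forall fun s _ => hasFDerivAt_lag_slice hV hΦ s μ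

lemma integral_lagD_eq (hV : ContDiff ℝ (⊤ : ℕ∞) V) (hΦ : IsGlobalHamFlow n V Φ)
    (t : ℝ) (μ : Euc n) :
    (∫ s in (0:ℝ)..t, lagD n V Φ y (s, μ)) =
      (innerSL ℝ (flowY n Φ y (t, μ)).2).comp
        ((ContinuousLinearMap.fst ℝ (Euc n) (Euc n)).comp
          ((fderiv ℝ (flowY n Φ y) (t, μ)).comp (ContinuousLinearMap.inr ℝ ℝ (Euc n)))) := by
  have hint : IntervalIntegrable (fun s => lagD n V Φ y (s, μ)) MeasureTheory.volume 0 t :=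
    ((continuous_lagD hV hΦ).comp (continuous_id.prodMk continuous_const)).intervalIntegrable 0 t
  refine ContinuousLinearMap.ext fun v => ?_
  rw [ContinuousLinearMap.intervalIntegral_apply hint v, integral_lagD hV hΦ t μ v]
  rfl

lemma hasFDerivAt_endpoint (hV : ContDiff ℝ (⊤ : ℕ∞) V) (hΦ : IsGlobalHamFlow n V Φ)
    (t : ℝ) (μ : Euc n) :
    HasFDerivAt (fun p : ℝ × Euc n => ∫ s in t..p.1, lag n V Φ y lam (s, p.2))
      (lag n V Φ y lam (t, μ) • ContinuousLinearMap.fst ℝ ℝ (Euc n)) (t, μ) := by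
  rw [hasFDerivAt_iff_isLittleO_nhds_zero, Asymptotics.isLittleO_iff]
  intro c hc
  obtain ⟨δ, hδ, hball⟩ := Metric.continuousAt_iff.mp (continuous_lag hV hΦ
    (y := y) (lam := lam)).continuousAt c hc
  filter_upwards [Metric.ball_mem_nhds (0 : ℝ × Euc n) hδ] with p hp
  have hpnorm : ‖p‖ < δ := by simpa [dist_zero_right] using hp
  obtain ⟨τ, w⟩ := p
  have hτ : |τ| ≤ ‖(τ, w)‖ := norm_fst_le (τ, w)
  have hw : ‖w‖ ≤ ‖(τ, w)‖ := norm_snd_le (τ, w)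
  have hbound : ∀ s ∈ Set.uIoc t (t + τ),
      ‖lag n V Φ y lam (s, μ + w) - lag n V Φ y lam (t, μ)‖ ≤ c := by
    intro s hs
    have hst : |s - t| ≤ |τ| := by
      have := Set.abs_sub_left_of_mem_uIcc (Set.uIoc_subset_uIcc hs)
      simpa using this
    have hdist : dist (s, μ + w) ((t, μ) : ℝ × Euc n) < δ := by
      rw [Prod.dist_eq]
      refine max_lt ?_ ?_
      · rw [Real.dist_eq]
        exact lt_of_le_of_lt (hst.trans hτ) hpnorm
      · rw [dist_eq_norm]
        simpa using lt_of_le_of_lt hw hpnorm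
    have := hball hdist
    rw [Real.dist_eq] at this
    exact (le_of_lt this)
  have hint : IntervalIntegrable (fun s => lag n V Φ y lam (s, μ + w))
      MeasureTheory.volume t (t + τ) :=
    ((continuous_lag hV hΦ).comp (continuous_id.prodMk continuous_const)).intervalIntegrable _ _
  have heq : (fun p : ℝ × Euc n => ∫ s in t..p.1, lag n V Φ y lam (s, p.2))
        ((t, μ) + (τ, w)) -
      (fun p : ℝ × Euc n => ∫ s in t..p.1, lag n V Φ y lam (s, p.2)) (t, μ) -
      (lag n V Φ y lam (t, μ) • ContinuousLinearMap.fst ℝ ℝ (Euc n)) (τ, w) =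
      ∫ s in t..(t + τ), (lag n V Φ y lam (s, μ + w) - lag n V Φ y lam (t, μ)) := by
    have h1 : (fun p : ℝ × Euc n => ∫ s in t..p.1, lag n V Φ y lam (s, p.2)) (t, μ) = 0 := by
      simp
    rw [h1]
    rw [intervalIntegral.integral_sub hint intervalIntegrable_const]
    simp [intervalIntegral.integral_const, smul_eq_mul, mul_comm]
  rw [heq]
  calc ‖∫ s in t..(t + τ), (lag n V Φ y lam (s, μ + w) - lag n V Φ y lam (t, μ))‖
      ≤ c * |(t + τ) - t| := intervalIntegral.norm_integral_le_of_norm_le_const hbound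
    _ ≤ c * ‖(τ, w)‖ := by
        rw [mul_le_mul_iff_right₀ hc]
        simpa using hτ
    _ = c * ‖((τ, w) : ℝ × Euc n)‖ := rfl

lemma psi_hasFDerivAt (hV : ContDiff ℝ (⊤ : ℕ∞) V) (hΦ : IsGlobalHamFlow n V Φ)
    (t : ℝ) (μ : Euc n) :
    HasFDerivAt (fun p : ℝ × Euc n => ∫ s in (0:ℝ)..p.1, lag n V Φ y lam (s, p.2))
      (lag n V Φ y lam (t, μ) • ContinuousLinearMap.fst ℝ ℝ (Euc n) +
        ((innerSL ℝ (flowY n Φ y (t, μ)).2).comp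
          ((ContinuousLinearMap.fst ℝ (Euc n) (Euc n)).comp
            ((fderiv ℝ (flowY n Φ y) (t, μ)).comp
              (ContinuousLinearMap.inr ℝ ℝ (Euc n))))).comp
          (ContinuousLinearMap.snd ℝ ℝ (Euc n))) (t, μ) := by
  have h2 := hasFDerivAt_integral_slice (y := y) (lam := lam) hV hΦ t μ
  rw [integral_lagD_eq hV hΦ t μ] at h2
  have h2' := h2.comp (t, μ) (hasFDerivAt_snd (𝕜 := ℝ) (p := ((t, μ) : ℝ × Euc n)))
  have h1 := hasFDerivAt_endpoint (y := y) (lam := lam) hV hΦ t μ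
  have hsum := h1.add h2'
  have heq : (fun p : ℝ × Euc n => ∫ s in (0:ℝ)..p.1, lag n V Φ y lam (s, p.2)) =
      fun p : ℝ × Euc n => (∫ s in t..p.1, lag n V Φ y lam (s, p.2)) +
        ∫ s in (0:ℝ)..t, lag n V Φ y lam (s, p.2) := by
    funext p
    have hi1 : IntervalIntegrable (fun s => lag n V Φ y lam (s, p.2))
        MeasureTheory.volume 0 t :=
      ((continuous_lag hV hΦ).comp
        (continuous_id.prodMk continuous_const)).intervalIntegrable _ _
    have hi2 : IntervalIntegrable (fun s => lag n V Φ y lam (s, p.2))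
        MeasureTheory.volume t p.1 :=
      ((continuous_lag hV hΦ).comp
        (continuous_id.prodMk continuous_const)).intervalIntegrable _ _
    rw [← intervalIntegral.integral_add_adjacent_intervals hi1 hi2]
    ring
  rw [heq]
  exact hsum
/-- **The Lagrangian parameterized by the action lies in the forward flow relation.**
In the central field and action setting with `t₀ > 0` and `T ⊆ (0, ∞)`, the set
`{(y, −η̂(t,y,z), z, ∇_z S(t,y,z)) : ∂S/∂t(t,y,z) = 0}` is contained in
`{(y, −η, x, ξ) : p(y,η) = λ, (x,ξ) = Φ(t,(y,η)) for some t > 0}`. -/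
theorem action_lagrangian_subset_forward_flow_relation
    (n : ℕ) (hn : 1 ≤ n)
    (V : Euc n → ℝ) (hV : ContDiff ℝ (⊤ : ℕ∞) V)
    (Φ : ℝ → Euc n × Euc n → Euc n × Euc n) (hΦ : IsGlobalHamFlow n V Φ)
    (t₀ : ℝ) (y₀ η₀ z₀ : Euc n) (hz₀ : z₀ = (Φ t₀ (y₀, η₀)).1)
    (hcf : IsUnit (fderiv ℝ (fun η => (Φ t₀ (y₀, η)).1) η₀))
    (T : Set ℝ) (Y Z : Set (Euc n))
    (hT : IsOpen T) (hY : IsOpen Y) (hZ : IsOpen Z)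
    (hconn : IsConnected (T ×ˢ Y ×ˢ Z))
    (ht₀ : t₀ ∈ T) (hy₀ : y₀ ∈ Y) (hz₀mem : z₀ ∈ Z)
    (ηh : ℝ → Euc n → Euc n → Euc n)
    (hηsmooth : ContDiffOn ℝ (⊤ : ℕ∞) (fun q : ℝ × Euc n × Euc n => ηh q.1 q.2.1 q.2.2)
      (T ×ˢ Y ×ˢ Z))
    (hη₀ : ηh t₀ y₀ z₀ = η₀)
    (hsolve : ∀ t ∈ T, ∀ y ∈ Y, ∀ z ∈ Z, (Φ t (y, ηh t y z)).1 = z)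
    (lam : ℝ) (S : ℝ → Euc n → Euc n → ℝ)
    (hS : ∀ t y z, S t y z = ∫ s in (0:ℝ)..t,
      ((1 / 2) * ‖(Φ s (y, ηh t y z)).2‖ ^ 2 - V (Φ s (y, ηh t y z)).1 + lam))
    (ht₀pos : 0 < t₀) (hTpos : T ⊆ Set.Ioi (0 : ℝ)) :
    {q : (Euc n × Euc n) × (Euc n × Euc n) |
        ∃ t ∈ T, ∃ y ∈ Y, ∃ z ∈ Z,
          deriv (fun t' => S t' y z) t = 0 ∧
          q = ((y, -ηh t y z), (z, gradient (fun z' => S t y z') z))} ⊆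
      {q : (Euc n × Euc n) × (Euc n × Euc n) |
        ∃ (t : ℝ) (y η : Euc n), 0 < t ∧ Ham n V (y, η) = lam ∧
          q = ((y, -η), Φ t (y, η))} := by
  intro q hq
  obtain ⟨t, htT, y, hyY, z, hzZ, hderiv, hqeq⟩ := hq
  set η := ηh t y z with hηdef
  have hmem : ((t, y, z) : ℝ × Euc n × Euc n) ∈ T ×ˢ Y ×ˢ Z := ⟨htT, hyY, hzZ⟩
  have hopen : IsOpen (T ×ˢ Y ×ˢ Z) := hT.prod (hY.prod hZ)
  have hηd : DifferentiableAt ℝ (fun q : ℝ × Euc n × Euc n => ηh q.1 q.2.1 q.2.2)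
      (t, y, z) :=
    (hηsmooth.contDiffAt (hopen.mem_nhds hmem)).differentiableAt (by simp)
  set N := fderiv ℝ (fun q : ℝ × Euc n × Euc n => ηh q.1 q.2.1 q.2.2) (t, y, z) with hNdef
  -- time derivative of t' ↦ ηh t' y z
  have hline_t : HasDerivAt (fun t' : ℝ => ((t', (y, z)) : ℝ × Euc n × Euc n))
      (1, (0 : Euc n), (0 : Euc n)) t :=
    (hasDerivAt_id t).prodMk (hasDerivAt_const t ((y, z) : Euc n × Euc n))
  have hm : HasDerivAt (fun t' => ηh t' y z) (N (1, (0 : Euc n), (0 : Euc n))) t :=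
    by have := hηd.hasFDerivAt.comp_hasDerivAt t hline_t; exact this
  set m' : Euc n := N (1, (0 : Euc n), (0 : Euc n)) with hm'def
  -- z-derivative of z' ↦ ηh t y z'
  have hline_z : HasFDerivAt (fun z' : Euc n => ((t, (y, z')) : ℝ × Euc n × Euc n))
      ((0 : Euc n →L[ℝ] ℝ).prod ((0 : Euc n →L[ℝ] Euc n).prod
        (ContinuousLinearMap.id ℝ (Euc n)))) z :=
    (hasFDerivAt_const t z).prodMk ((hasFDerivAt_const y z).prodMk (hasFDerivAt_id z))
  set K : Euc n →L[ℝ] Euc n :=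
    N.comp ((0 : Euc n →L[ℝ] ℝ).prod ((0 : Euc n →L[ℝ] Euc n).prod
      (ContinuousLinearMap.id ℝ (Euc n)))) with hKdef
  have hk : HasFDerivAt (fun z' => ηh t y z') K z :=
    by have := hηd.hasFDerivAt.comp z hline_z; exact this
  -- S as a composition with the parametric integral
  have hSfun : (fun t' => S t' y z) = fun t' =>
      (fun p : ℝ × Euc n => ∫ s in (0:ℝ)..p.1, lag n V Φ y lam (s, p.2))
        (t', ηh t' y z) := by
    funext t'
    rw [hS]
    rfl
  have hSfunz : (fun z' => S t y z') = fun z' =>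
      (fun p : ℝ × Euc n => ∫ s in (0:ℝ)..p.1, lag n V Φ y lam (s, p.2))
        (t, ηh t y z') := by
    funext z'
    rw [hS]
    rfl
  have hpsi := psi_hasFDerivAt (y := y) (lam := lam) hV hΦ t η
  -- the t-derivative of S
  have hst0 : HasDerivAt (fun t' => S t' y z)
      (lag n V Φ y lam (t, η) +
        ⟪(flowY n Φ y (t, η)).2,
          (fderiv ℝ (flowY n Φ y) (t, η) ((0:ℝ), m')).1⟫) t := by
    rw [hSfun]
    have := hpsi.comp_hasDerivAt t ((hasDerivAt_id t).prodMk hm)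
    refine this.congr_deriv ?_
    simp
  -- the flow identity differentiated in t
  have hBm : (fderiv ℝ (flowY n Φ y) (t, η) ((0:ℝ), m')).1 = -(flowY n Φ y (t, η)).2 := by
    have hzero : HasDerivAt (fun t' => (flowY n Φ y (t', ηh t' y z)).1) 0 t := by
      refine (hasDerivAt_const t z).congr_of_eventuallyEq ?_
      filter_upwards [hT.mem_nhds htT] with t' ht'
      exact hsolve t' ht' y hyY z hzZ
    have hinner : HasDerivAt (fun t' => flowY n Φ y (t', ηh t' y z))
        (fderiv ℝ (flowY n Φ y) (t, η) ((1:ℝ), m')) t :=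
      by have := (hasFDerivAt_flowY (y := y) hΦ (t, η)).comp_hasDerivAt t ((hasDerivAt_id t).prodMk hm); exact this
    have hflowd : HasDerivAt (fun t' => (flowY n Φ y (t', ηh t' y z)).1)
        ((fderiv ℝ (flowY n Φ y) (t, η) ((1:ℝ), m')).1) t :=
      (ContinuousLinearMap.fst ℝ (Euc n) (Euc n)).hasFDerivAt.comp_hasDerivAt t hinner
    have h1 : (fderiv ℝ (flowY n Φ y) (t, η) ((1:ℝ), m')).1 = 0 := hflowd.unique hzero
    have hsplit : ((1:ℝ), m') = ((1:ℝ), (0 : Euc n)) + ((0:ℝ), m') := by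
      simp [Prod.ext_iff]
    rw [hsplit, map_add, Prod.fst_add] at h1
    have hone : (fderiv ℝ (flowY n Φ y) (t, η) ((1:ℝ), (0 : Euc n))).1 =
        (flowY n Φ y (t, η)).2 := by
      rw [fderiv_flowY_one hΦ (t, η)]
      rfl
    rw [hone] at h1
    exact eq_neg_of_add_eq_zero_right h1
  have h0 : lag n V Φ y lam (t, η) - ‖(flowY n Φ y (t, η)).2‖ ^ 2 = 0 := by
    have := hst0.deriv
    rw [hderiv] at this
    rw [hBm, inner_neg_right, real_inner_self_eq_norm_sq] at this
    linarith [this.symm]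
  have hham : Ham n V (y, η) = lam := by
    have he := energy_conserved hV hΦ t ((y, η) : Euc n × Euc n)
    rw [← he]
    have hx : Ham n V (Φ t (y, η)) =
        (1/2) * ‖(flowY n Φ y (t, η)).2‖ ^ 2 + V (flowY n Φ y (t, η)).1 := rfl
    have hl : lag n V Φ y lam (t, η) =
        (1/2) * ‖(flowY n Φ y (t, η)).2‖ ^ 2 - V (flowY n Φ y (t, η)).1 + lam := rfl
    rw [hl] at h0
    rw [hx]
    linarith
  -- the z-derivative of S
  have hgz : HasFDerivAt (fun z' => S t y z')
      ((lag n V Φ y lam (t, η) • ContinuousLinearMap.fst ℝ ℝ (Euc n) +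
        ((innerSL ℝ (flowY n Φ y (t, η)).2).comp
          ((ContinuousLinearMap.fst ℝ (Euc n) (Euc n)).comp
            ((fderiv ℝ (flowY n Φ y) (t, η)).comp
              (ContinuousLinearMap.inr ℝ ℝ (Euc n))))).comp
          (ContinuousLinearMap.snd ℝ ℝ (Euc n))).comp
        ((0 : Euc n →L[ℝ] ℝ).prod K)) z := by
    rw [hSfunz]
    exact hpsi.comp z ((hasFDerivAt_const t z).prodMk hk)
  -- the flow identity differentiated in z
  have hBK : ∀ v : Euc n, (fderiv ℝ (flowY n Φ y) (t, η) ((0:ℝ), K v)).1 = v := by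
    have hid : HasFDerivAt (fun z' => (flowY n Φ y (t, ηh t y z')).1)
        (ContinuousLinearMap.id ℝ (Euc n)) z := by
      refine (hasFDerivAt_id z).congr_of_eventuallyEq ?_
      filter_upwards [hZ.mem_nhds hzZ] with z' hz'
      exact hsolve t htT y hyY z' hz'
    have hinner : HasFDerivAt (fun z' => flowY n Φ y (t, ηh t y z'))
        ((fderiv ℝ (flowY n Φ y) (t, η)).comp ((0 : Euc n →L[ℝ] ℝ).prod K)) z :=
      by have := (hasFDerivAt_flowY (y := y) hΦ (t, η)).comp z ((hasFDerivAt_const t z).prodMk hk); exact this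
    have hflowd : HasFDerivAt (fun z' => (flowY n Φ y (t, ηh t y z')).1)
        ((ContinuousLinearMap.fst ℝ (Euc n) (Euc n)).comp
          ((fderiv ℝ (flowY n Φ y) (t, η)).comp ((0 : Euc n →L[ℝ] ℝ).prod K))) z :=
      (ContinuousLinearMap.fst ℝ (Euc n) (Euc n)).hasFDerivAt.comp z hinner
    have huniq := hflowd.unique hid
    intro v
    have := ContinuousLinearMap.ext_iff.mp huniq v
    simpa using this
  have hfd : HasFDerivAt (fun z' => S t y z') (innerSL ℝ (flowY n Φ y (t, η)).2) z := by
    have heq : ((lag n V Φ y lam (t, η) • ContinuousLinearMap.fst ℝ ℝ (Euc n) +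
        ((innerSL ℝ (flowY n Φ y (t, η)).2).comp
          ((ContinuousLinearMap.fst ℝ (Euc n) (Euc n)).comp
            ((fderiv ℝ (flowY n Φ y) (t, η)).comp
              (ContinuousLinearMap.inr ℝ ℝ (Euc n))))).comp
          (ContinuousLinearMap.snd ℝ ℝ (Euc n))).comp
        ((0 : Euc n →L[ℝ] ℝ).prod K)) = innerSL ℝ (flowY n Φ y (t, η)).2 := by
      refine ContinuousLinearMap.ext fun v => ?_
      have hv := hBK v
      simp [hv]
    rw [heq] at hgz
    exact hgz
  have hgradval : gradient (fun z' => S t y z') z = (flowY n Φ y (t, η)).2 := by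
    have hg := hfd.hasGradientAt
    rw [hg.gradient]
    exact (InnerProductSpace.toDual ℝ (Euc n)).symm_apply_apply _
  refine ⟨t, y, η, hTpos htT, hham, ?_⟩
  rw [hqeq]
  have hflow : Φ t (y, η) = (z, gradient (fun z' => S t y z') z) := by
    rw [hgradval]
    exact Prod.ext (hsolve t htT y hyY z hzZ) rfl
  rw [hflow]
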